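/- arXiv:1405.5860 — 2 statements merged into one kernel-verified Lean document; each statement's English description precedes it below -/
import Mathlib

section
/- If a total preorder ≼ on a real vector space satisfies the scaling and addition axioms, then every indifference class [x] = {y : y ∼ x} is an affine subset: if y, z ∈ [x] then (1−λ)•y + λ•z ∈ [x] for every real λ. -/
/-!
Translation invariance makes `x ∼ y` equivalent to `x - y ∼ 0`, so every indifference class is
a translate of `[0]`. The class `[0]` is closed under negation (translate `v ∼ 0` by `-v`) and
under positive scaling, hence under all scalar multiples; and
`(1 - λ) • y + λ • z - y = λ • (z - y)`.
-/

theorem antisymmRel_smul_iff_of_pos {𝕜 Y : Type*} [Zero 𝕜] [LT 𝕜] [SMul 𝕜 Y]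
    {r : Y → Y → Prop}
    (hscale : ∀ l : 𝕜, 0 < l → ∀ x y : Y, r x y ↔ r (l • x) (l • y))
    {c : 𝕜} (hc : 0 < c) {x y : Y} : AntisymmRel r (c • x) (c • y) ↔ AntisymmRel r x y := by
  rw [AntisymmRel, AntisymmRel, ← hscale c hc, ← hscale c hc]

section IndifferenceClass

variable {𝕜 Y : Type*} [AddCommGroup Y] {r : Y → Y → Prop}

theorem antisymmRel_add_right_iff (hadd : ∀ z x y : Y, r x y ↔ r (x + z) (y + z))
    {x y : Y} (z : Y) : AntisymmRel r (x + z) (y + z) ↔ AntisymmRel r x y := by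
  rw [AntisymmRel, AntisymmRel, ← hadd, ← hadd]

theorem antisymmRel_sub_zero_iff (hadd : ∀ z x y : Y, r x y ↔ r (x + z) (y + z))
    {x y : Y} : AntisymmRel r (x - y) 0 ↔ AntisymmRel r x y := by
  rw [← antisymmRel_add_right_iff hadd y, sub_add_cancel, zero_add]

theorem AntisymmRel.neg_zero (hadd : ∀ z x y : Y, r x y ↔ r (x + z) (y + z))
    {v : Y} (hv : AntisymmRel r v 0) : AntisymmRel r (-v) 0 := by
  rw [← zero_sub, antisymmRel_sub_zero_iff hadd]
  exact hv.symm

variable [Ring 𝕜] [LinearOrder 𝕜] [IsOrderedRing 𝕜] [Module 𝕜 Y]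

theorem AntisymmRel.smul_zero [IsTrans Y r]
    (hscale : ∀ l : 𝕜, 0 < l → ∀ x y : Y, r x y ↔ r (l • x) (l • y))
    (hadd : ∀ z x y : Y, r x y ↔ r (x + z) (y + z))
    {w : Y} (hw : AntisymmRel r w 0) (c : 𝕜) : AntisymmRel r (c • w) 0 := by
  rcases lt_trichotomy c 0 with hc | rfl | hc
  · have hpos : AntisymmRel r ((-c) • -w) ((-c) • 0) :=
      (antisymmRel_smul_iff_of_pos hscale (neg_pos.2 hc)).2 (hw.neg_zero hadd)
    rwa [neg_smul_neg, _root_.smul_zero] at hpos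
  · rw [zero_smul]
    exact hw.symm.trans hw
  · simpa only [_root_.smul_zero] using (antisymmRel_smul_iff_of_pos hscale hc).2 hw

end IndifferenceClass

theorem stmt_2_general {Y : Type*} [AddCommGroup Y] [Module ℝ Y]
    (r : Y → Y → Prop)
    (htrans : ∀ x y z, r x y → r y z → r x z)
    (hscale : ∀ (l : ℝ), 0 < l → ∀ x y, r x y ↔ r (l • x) (l • y))
    (hadd : ∀ (z : Y), ∀ x y, r x y ↔ r (x + z) (y + z)) :
    ∀ x y z : Y, (r x y ∧ r y x) → (r x z ∧ r z x) →
      ∀ l : ℝ, r x ((1 - l) • y + l • z) ∧ r ((1 - l) • y + l • z) x := by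
  intro x y z hxy hxz l
  have : IsTrans Y r := ⟨htrans⟩
  have hzy : AntisymmRel r (z - y) 0 :=
    (antisymmRel_sub_zero_iff hadd).2 (AntisymmRel.trans (AntisymmRel.symm hxz) hxy)
  have hseg : AntisymmRel r ((1 - l) • y + l • z - y) 0 := by
    convert hzy.smul_zero hscale hadd l using 1
    module
  exact AntisymmRel.trans hxy ((antisymmRel_sub_zero_iff hadd).1 hseg).symm

theorem stmt_2 {Y : Type*} [AddCommGroup Y] [Module ℝ Y]
    (r : Y → Y → Prop)
    (htotal : ∀ x y, r x y ∨ r y x)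
    (htrans : ∀ x y z, r x y → r y z → r x z)
    (hscale : ∀ (l : ℝ), 0 < l → ∀ x y, r x y ↔ r (l • x) (l • y))
    (hadd : ∀ (z : Y), ∀ x y, r x y ↔ r (x + z) (y + z)) :
    ∀ x y z : Y, (r x y ∧ r y x) → (r x z ∧ r z x) →
      ∀ l : ℝ, r x ((1 - l) • y + l • z) ∧ r ((1 - l) • y + l • z) x :=
  stmt_2_general r htrans hscale hadd
end

section
/- A total preorder ≼ on a real vector space satisfying the scaling, addition, and Archimedean axioms has a countable order-dense subset relative to any fixed element z with 0 < z: namely Q = {(m/n)•z : m ∈ ℤ, n ∈ ℕ, n > 0}. Precisely, if 0 < x < y (strict preference), then there exists q ∈ Q with x < q < y. -/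
theorem stmt_3 {Y : Type*} [AddCommGroup Y] [Module ℝ Y]
    (r : Y → Y → Prop)
    (htotal : ∀ x y, r x y ∨ r y x)
    (htrans : ∀ x y z, r x y → r y z → r x z)
    (hscale : ∀ (l : ℝ), 0 < l → ∀ x y, r x y ↔ r (l • x) (l • y))
    (hadd : ∀ (w : Y), ∀ x y, r x y ↔ r (x + w) (y + w))
    (harch : ∀ x y, (∀ n : ℕ, r (n • x) y) → r x 0)
    (z : Y) (hz : r 0 z ∧ ¬ r z 0) :
    ∀ x y : Y, (r 0 x ∧ ¬ r x 0) → (r x y ∧ ¬ r y x) →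
      ∃ (m : ℤ) (n : ℕ), 0 < n ∧
        (r x (((m : ℝ) / (n : ℝ)) • z) ∧ ¬ r (((m : ℝ) / (n : ℝ)) • z) x) ∧
        (r (((m : ℝ) / (n : ℝ)) • z) y ∧ ¬ r y (((m : ℝ) / (n : ℝ)) • z)) := by
  intro x y hx hxy
  have hrefl : ∀ a : Y, r a a := fun a => (htotal a a).elim id id
  -- Step 1: find n with z < n • (y - x)
  have hn : ∃ n : ℕ, ¬ r (n • (y - x)) z := by
    by_contra h
    push_neg at h
    have := harch (y - x) z h
    -- r (y-x) 0 → r y x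
    have h2 := (hadd x (y - x) 0).mp this
    simp only [sub_add_cancel, zero_add] at h2
    exact hxy.2 h2
  obtain ⟨n, hnlt⟩ := hn
  have hn0 : n ≠ 0 := by
    intro h; subst h; simp at hnlt; exact hnlt hz.1
  have hnpos : (0 : ℝ) < (n : ℝ) := by positivity
  have hinv : (0 : ℝ) < 1 / (n : ℝ) := by positivity
  set u : Y := ((1 : ℝ) / (n : ℝ)) • z with hu
  have hcast : ∀ (k : ℕ) (v : Y), k • v = (k : ℝ) • v :=
    fun k v => (Nat.cast_smul_eq_nsmul ℝ k v).symm
  -- z < n • (y - x), strictly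
  -- u < y - x strictly
  have hu_lt : r u (y - x) ∧ ¬ r (y - x) u := by
    have hiff := hscale (1 / (n : ℝ)) hinv z (n • (y - x))
    have heq : ((1 : ℝ) / (n : ℝ)) • (n • (y - x)) = y - x := by
      rw [hcast n (y - x), smul_smul]
      rw [one_div, inv_mul_cancel₀ (ne_of_gt hnpos), one_smul]
    constructor
    · have h1 : r z (n • (y - x)) := (htotal _ _).resolve_right hnlt
      have := hiff.mp h1
      rwa [heq] at this
    · intro h
      have hiff2 := hscale (1 / (n : ℝ)) hinv (n • (y - x)) z
      have h2 : r (((1:ℝ)/(n:ℝ)) • (n • (y-x))) u := by rw [heq]; exact h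
      exact hnlt (hiff2.mpr h2)
  -- 0 < u strictly
  have h0u : r 0 u ∧ ¬ r u 0 := by
    have hiff := hscale (1 / (n : ℝ)) hinv 0 z
    have hiff2 := hscale (1 / (n : ℝ)) hinv z 0
    rw [smul_zero] at hiff hiff2
    exact ⟨hiff.mp hz.1, fun h => hz.2 (hiff2.mpr h)⟩
  -- find least m with ¬ r (m • u) x
  have hex : ∃ k : ℕ, ¬ r (k • u) x := by
    by_contra h
    push_neg at h
    exact h0u.2 (harch u x h)
  classical
  let m := Nat.find hex
  have hm : ¬ r (m • u) x := Nat.find_spec hex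
  have hm0 : m ≠ 0 := by
    intro h
    have : ¬ r ((0 : ℕ) • u) x := h ▸ hm
    simp at this
    exact this hx.1
  have hmpred : r ((m - 1) • u) x := by
    by_contra h
    have h2 : m ≤ m - 1 := Nat.find_le h
    omega
  -- x < m • u strictly
  have hx_lt : r x (m • u) ∧ ¬ r (m • u) x :=
    ⟨(htotal _ _).resolve_right hm, hm⟩
  -- m • u < y strictly
  have hmsplit : m • u = (m - 1) • u + u := by
    conv_lhs => rw [show m = (m - 1) + 1 by omega]
    rw [add_smul, one_smul]
  have hstep : r (m • u) (x + u) := by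
    rw [hmsplit]
    exact (hadd u ((m-1) • u) x).mp hmpred
  have hxu_lt : r (x + u) y ∧ ¬ r y (x + u) := by
    have hiff := hadd x u (y - x)
    rw [sub_add_cancel, add_comm u x] at hiff
    have hiff2 := hadd x (y - x) u
    rw [sub_add_cancel, add_comm u x] at hiff2
    exact ⟨hiff.mp hu_lt.1, fun h => hu_lt.2 (hiff2.mpr h)⟩
  have hmu_lt : r (m • u) y ∧ ¬ r y (m • u) :=
    ⟨htrans _ _ _ hstep hxu_lt.1,
     fun h => hxu_lt.2 (htrans _ _ _ h hstep)⟩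
  refine ⟨(m : ℤ), n, Nat.pos_of_ne_zero hn0, ?_, ?_⟩
  · have heq : (((m : ℤ) : ℝ) / (n : ℝ)) • z = m • u := by
      rw [hcast m u, hu, smul_smul]
      push_cast
      ring_nf
    rw [heq]
    exact hx_lt
  · have heq : (((m : ℤ) : ℝ) / (n : ℝ)) • z = m • u := by
      rw [hcast m u, hu, smul_smul]
      push_cast
      ring_nf
    rw [heq]
    exact hmu_lt
end
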